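/- arXiv:2012.14536 — 6 statements merged into one kernel-verified Lean document; each statement's English description precedes it below -/
import Mathlib

section
/- Under the integer-valued bounded reward model with β > M, for any human i, any trajectory τ_i maximizing the total utility β·R_i(τ_i) + E[R_i(g(τ_i, τ_{-i}))] must satisfy R_i(τ_i) = max_τ R_i(τ); that is, every best response is an honest (personally optimal) trajectory. -/
/-- Integer-valued bounded rewards, `β > M`: every best response
(maximizer of `τ ↦ β·R(τ) + m(τ)` where `m` is the mechanism contribution against a
fixed profile of others, `0 ≤ m ≤ M`) is an honest, i.e. personally optimal,
trajectory: `R τ⋆ = max_τ R τ`. -/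
theorem best_response_is_honest_int
    {T : Type} [Fintype T] [Nonempty T]
    (R : T → ℕ) (M : ℕ) (hR : ∀ τ, R τ ≤ M)
    (m : T → ℝ) (hm0 : ∀ τ, 0 ≤ m τ) (hmM : ∀ τ, m τ ≤ M)
    (β : ℝ) (hβ : (M : ℝ) < β)
    (τstar : T)
    (hmax : ∀ τ, β * (R τ : ℝ) + m τ ≤ β * (R τstar : ℝ) + m τstar) :
    ∀ τ, R τ ≤ R τstar := by
  intro τ
  by_contra h
  push_neg at h
  have h1 : (R τstar : ℝ) + 1 ≤ (R τ : ℝ) := by exact_mod_cast h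
  have hβ0 : 0 < β := lt_of_le_of_lt (Nat.cast_nonneg M) hβ
  have := hmax τ
  nlinarith [hm0 τ, hmM τstar, hm0 τstar]
end

section
/- For any β > 0 and any function m : T → ℝ with values in [0, M], if β·γ > M where γ is the minimal positive gap of R below its maximum, then the argmax set of τ ↦ β·R(τ) + m(τ) is contained in the argmax set of R. -/
/-- `T` finite nonempty, `R` non-constant with maximum `Rstar`, `γ` the
minimal positive gap of `R` below its maximum, `m : T → [0, M]`, `β > 0`.  If `β·γ > M`
then the argmax set of `τ ↦ β·R(τ) + m(τ)` is contained in the argmax set of `R`. -/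
theorem argmax_total_subset_argmax_reward
    {T : Type} [Fintype T] [Nonempty T]
    (R : T → ℝ) (Rstar : ℝ)
    (hRstar : IsGreatest (Set.range R) Rstar)
    (hnonconst : ∃ τ, R τ < Rstar)
    (γ : ℝ)
    (hγ : IsLeast {d : ℝ | ∃ τ, R τ < Rstar ∧ d = Rstar - R τ} γ)
    (M : ℝ) (m : T → ℝ) (hm0 : ∀ τ, 0 ≤ m τ) (hmM : ∀ τ, m τ ≤ M)
    (β : ℝ) (hβpos : 0 < β) (hβγ : M < β * γ) :
    {τ | ∀ τ', β * R τ' + m τ' ≤ β * R τ + m τ} ⊆ {τ | ∀ τ', R τ' ≤ R τ} := by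
  intro τ hτ τ'
  obtain ⟨τs, hτs⟩ := hRstar.1
  have hle : ∀ t, R t ≤ Rstar := fun t => hRstar.2 ⟨t, rfl⟩
  have hRτ : R τ = Rstar := by
    by_contra h
    have hlt : R τ < Rstar := lt_of_le_of_ne (hle τ) h
    have hγle : γ ≤ Rstar - R τ := hγ.2 ⟨τ, hlt, rfl⟩
    have h1 := hτ τs
    rw [hτs] at h1
    have : β * (Rstar - R τ) ≤ m τ - m τs := by linarith
    have h2 : β * γ ≤ β * (Rstar - R τ) :=
      mul_le_mul_of_nonneg_left hγle hβpos.le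
    have := hm0 τs
    have := hmM τ
    linarith
  rw [hRτ]; exact hle τ'
end

section
/- Consider 3 alternatives and utility functions u in the 2-simplex Δ = {u ∈ ℝ³ : u_i ≥ 0, u_1 + u_2 + u_3 = 1}. A voter votes for one alternative; given the two other voters' votes, the plurality winner with uniform random tiebreak determines the voter's expected utility. Call u manipulable if the voter's best-response vote depends on the other voters' votes (with β = 0, i.e., no cost of voting). Then the set of manipulable u has Lebesgue measure (relative area in the simplex) equal to 1/3 of the simplex. -/
open MeasureTheory

/-- Expected utility of the plurality winner (uniform random tiebreak) with 3 voters: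
our voter votes `a`, the opponents vote `b` and `c`. -/
noncomputable def pluralityEU (u : Fin 3 → ℝ) (a b c : Fin 3) : ℝ :=
  if a = b then u a else if a = c then u a else if b = c then u b
  else (u a + u b + u c) / 3

/-- `a` is a best response (β = 0, no voting cost) against opponent votes `(b, c)`. -/
def BestResponse0 (u : Fin 3 → ℝ) (b c a : Fin 3) : Prop :=
  ∀ a', pluralityEU u a' b c ≤ pluralityEU u a b c

/-- `u` is manipulable: the best-response set depends on the others' votes, i.e. there
are two opponent profiles with disjoint best-response sets. -/
def Manipulable0 (u : Fin 3 → ℝ) : Prop :=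
  ∃ b c b' c', ∀ a : Fin 3, ¬ (BestResponse0 u b c a ∧ BestResponse0 u b' c' a)

/-- Parametrization of the 2-simplex `{u ≥ 0, u₁ + u₂ + u₃ = 1}` by `(u₁, u₂) ∈ ℝ²`. -/
noncomputable def simplexU (p : ℝ × ℝ) : Fin 3 → ℝ := ![p.1, p.2, 1 - p.1 - p.2]

/-- The parameter region corresponding to the 2-simplex. -/
def simplexRegion : Set (ℝ × ℝ) := {p | 0 ≤ p.1 ∧ 0 ≤ p.2 ∧ p.1 + p.2 ≤ 1}

/-!
Against opponents who agree, the vote does not matter. Against opponents voting for distinct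
`b ≠ c`, voting `b` or `c` elects it, while voting the third alternative creates a three-way tie
worth the average utility `1/3`. So if two utilities `u i, u j` exceed `1/3`, then `i` and `j` are
the unique best responses against `(i, k)` and `(j, k)`; otherwise an alternative of largest
utility is a best response against every profile. In the chart `(u₁, u₂)` the region where two
utilities exceed `1/3` consists, up to boundary segments, of three right triangles of leg `1/3`,
of total area `3 · 1/18 = 1/6`, against `1/2` for the simplex.
-/

open Set

theorem Fin.sum_univ_three_of_ne {M : Type*} [AddCommMonoid M] (f : Fin 3 → M) {i j k : Fin 3}
    (hij : i ≠ j) (hik : i ≠ k) (hjk : j ≠ k) : ∑ l, f l = f i + f j + f k := by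
  rw [Fin.sum_univ_three]
  fin_cases i <;> fin_cases j <;> fin_cases k <;> simp_all <;> abel

theorem pluralityEU_self_self (u : Fin 3 → ℝ) (a b : Fin 3) : pluralityEU u a b b = u b := by
  unfold pluralityEU
  split_ifs <;> simp_all

theorem pluralityEU_of_ne (u : Fin 3 → ℝ) {b c : Fin 3} (hbc : b ≠ c) (a : Fin 3) :
    pluralityEU u a b c = if a = b ∨ a = c then u a else (∑ i, u i) / 3 := by
  unfold pluralityEU
  by_cases hab : a = b
  · simp [hab]
  by_cases hac : a = c
  · simp [hac]
  simp [hab, hac, hbc, Fin.sum_univ_three_of_ne u hab hac hbc]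

section Simplex

variable {u : Fin 3 → ℝ}

theorem bestResponse0_of_forall_ne_le (hu : ∑ i, u i = 1) {i : Fin 3} (hi : 1 / 3 ≤ u i)
    (hj : ∀ j ≠ i, u j ≤ 1 / 3) (b c : Fin 3) : BestResponse0 u b c i := by
  intro a
  rcases eq_or_ne b c with rfl | hbc
  · simp only [pluralityEU_self_self, le_refl]
  have ha : a = i ∨ u a ≤ 1 / 3 := or_iff_not_imp_left.2 (hj a)
  rw [pluralityEU_of_ne u hbc, pluralityEU_of_ne u hbc, hu]
  split_ifs <;> rcases ha with rfl | ha <;> simp_all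
  linarith

theorem eq_of_bestResponse0 (hu : ∑ i, u i = 1) {a b c : Fin 3} (hbc : b ≠ c)
    (hb : 1 / 3 < u b) (hcb : u c < u b) (ha : BestResponse0 u b c a) : a = b := by
  by_contra hab
  have hvote := ha b
  rw [pluralityEU_of_ne u hbc, pluralityEU_of_ne u hbc, hu] at hvote
  split_ifs at hvote <;> simp_all <;> linarith

theorem manipulable0_of_lt_of_lt (hu : ∑ i, u i = 1) {i j k : Fin 3} (hij : i ≠ j) (hik : i ≠ k)
    (hjk : j ≠ k) (hi : 1 / 3 < u i) (hj : 1 / 3 < u j) : Manipulable0 u := by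
  have hk : u k < 1 / 3 := by linarith [Fin.sum_univ_three_of_ne u hij hik hjk]
  refine ⟨i, k, j, k, fun a ⟨hai, haj⟩ ↦ hij ?_⟩
  rw [← eq_of_bestResponse0 hu hik hi (by linarith) hai,
    eq_of_bestResponse0 hu hjk hj (by linarith) haj]

theorem manipulable0_iff_exists_ne (hu : ∑ i, u i = 1) :
    Manipulable0 u ↔ ∃ i j, i ≠ j ∧ 1 / 3 < u i ∧ 1 / 3 < u j := by
  constructor
  · contrapose!
    rintro hle ⟨b, c, b', c', hdisj⟩
    obtain ⟨i, hi, hj⟩ : ∃ i, 1 / 3 ≤ u i ∧ ∀ j ≠ i, u j ≤ 1 / 3 := by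
      by_cases hbig : ∃ i, 1 / 3 < u i
      · obtain ⟨i, hi⟩ := hbig
        exact ⟨i, hi.le, fun j hji ↦ hle i j hji.symm hi⟩
      · push Not at hbig
        refine ⟨0, ?_, fun j _ ↦ hbig j⟩
        linarith [hbig 1, hbig 2, Fin.sum_univ_three u ▸ hu]
    exact hdisj i ⟨bestResponse0_of_forall_ne_le hu hi hj b c,
      bestResponse0_of_forall_ne_le hu hi hj b' c'⟩
  · rintro ⟨i, j, hij, hi, hj⟩
    obtain ⟨k, hik, hjk⟩ : ∃ k, i ≠ k ∧ j ≠ k := by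
      clear hi hj; revert i j; decide
    exact manipulable0_of_lt_of_lt hu hij hik hjk hi hj

end Simplex

theorem sum_simplexU (p : ℝ × ℝ) : ∑ i, simplexU p i = 1 := by
  simp [simplexU, Fin.sum_univ_three]

theorem manipulable0_simplexU_iff (p : ℝ × ℝ) :
    Manipulable0 (simplexU p) ↔ (1 / 3 < p.1 ∧ 1 / 3 < p.2) ∨
      (1 / 3 < p.1 ∧ p.1 + p.2 < 2 / 3) ∨ (1 / 3 < p.2 ∧ p.1 + p.2 < 2 / 3) := by
  rw [manipulable0_iff_exists_ne (sum_simplexU p)]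
  have hz : (3⁻¹ : ℝ) < 1 - p.1 - p.2 ↔ p.1 + p.2 < 2 / 3 := by
    constructor <;> intro h <;> linarith
  simp only [Fin.exists_fin_succ, simplexU, one_div]
  simp [hz]
  tauto

namespace MeasureTheory.Measure

variable {α : Type*} [MeasurableSpace α] (μ : Measure α)

theorem prod_setOf_fst_eq {β : Type*} [MeasurableSpace β] (ν : Measure β) [SFinite ν]
    [NullSingletonClass μ] (a : α) : μ.prod ν {p | p.1 = a} = 0 := by
  rw [show {p : α × β | p.1 = a} = {a} ×ˢ univ by ext; simp, prod_prod, measure_singleton,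
    zero_mul]

theorem prod_volume_graph [SFinite μ] {g : α → ℝ} (hg : Measurable g) :
    μ.prod volume {p | p.2 = g p.1} = 0 := by
  rw [measure_prod_null (measurableSet_graph hg)]
  exact Filter.Eventually.of_forall fun _ ↦ by simp [Set.preimage]

end MeasureTheory.Measure

section Triangle

variable (a b c : ℝ)

def openTriangle : Set (ℝ × ℝ) := {p | a < p.1 ∧ b < p.2 ∧ p.1 + p.2 < a + b + c}

def closedTriangle : Set (ℝ × ℝ) := {p | a ≤ p.1 ∧ b ≤ p.2 ∧ p.1 + p.2 ≤ a + b + c}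

theorem isOpen_openTriangle : IsOpen (openTriangle a b c) :=
  (isOpen_lt continuous_const continuous_fst).inter <|
    (isOpen_lt continuous_const continuous_snd).inter <|
      isOpen_lt (continuous_fst.add continuous_snd) continuous_const

theorem openTriangle_subset_closedTriangle : openTriangle a b c ⊆ closedTriangle a b c :=
  fun _ ⟨hx, hy, hxy⟩ ↦ ⟨hx.le, hy.le, hxy.le⟩

theorem openTriangle_eq_regionBetween :
    openTriangle a b c = regionBetween (fun _ ↦ b) (fun x ↦ a + b + c - x) (Ioo a (a + c)) := by
  ext ⟨x, y⟩
  simp only [openTriangle, regionBetween, mem_ofPred_eq, mem_Ioo]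
  constructor
  · rintro ⟨hx, hy, hxy⟩
    exact ⟨⟨hx, by linarith⟩, hy, by linarith⟩
  · rintro ⟨⟨hx, -⟩, hy, hxy⟩
    exact ⟨hx, hy, by linarith⟩

theorem volume_openTriangle {c : ℝ} (hc : 0 ≤ c) :
    volume (openTriangle a b c) = ENNReal.ofReal (c ^ 2 / 2) := by
  rw [openTriangle_eq_regionBetween, Measure.volume_eq_prod,
    volume_regionBetween_eq_integral (integrableOn_const measure_Ioo_lt_top.ne)
      ((by fun_prop : Continuous fun x : ℝ ↦ a + b + c - x).integrableOn_Ioc.mono_set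
        Ioo_subset_Ioc_self)
      measurableSet_Ioo fun x hx ↦ by linarith [hx.2],
    ← integral_Ioc_eq_integral_Ioo, ← intervalIntegral.integral_of_le (by linarith)]
  congr 1
  calc ∫ x in a..a + c, (a + b + c - x) - b
      = ∫ x in a..a + c, (a + c - x) := by congr 1; ext x; ring
    _ = c ^ 2 / 2 := by
      rw [intervalIntegral.integral_comp_sub_left (fun x ↦ x), integral_id]; ring

theorem closedTriangle_ae_eq_openTriangle : closedTriangle a b c =ᵐ[volume] openTriangle a b c := by
  have hsides : closedTriangle a b c \ openTriangle a b c ⊆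
      {p | p.1 = a} ∪ {p | p.2 = (fun _ ↦ b) p.1} ∪ {p | p.2 = (fun x ↦ a + b + c - x) p.1} := by
    rintro ⟨x, y⟩ ⟨⟨hx, hy, hxy⟩, hT⟩
    simp only [openTriangle, mem_ofPred_eq, not_and_or, not_lt] at hT
    simp only [mem_union, mem_ofPred_eq]
    rcases hT with h | h | h
    · exact .inl (.inl (by linarith))
    · exact .inl (.inr (by linarith))
    · exact .inr (by linarith)
  refine ae_eq_set.2 ⟨measure_mono_null hsides ?_, ?_⟩
  · rw [Measure.volume_eq_prod]
    exact measure_union_null (measure_union_null (Measure.prod_setOf_fst_eq _ _ a)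
      (Measure.prod_volume_graph _ measurable_const))
      (Measure.prod_volume_graph _ (by fun_prop))
  · rw [sdiff_eq_empty.2 (openTriangle_subset_closedTriangle a b c), measure_empty]

variable {a b c}

theorem ae_eq_openTriangle_of_subset {s : Set (ℝ × ℝ)} (hTs : openTriangle a b c ⊆ s)
    (hsK : s ⊆ closedTriangle a b c) : s =ᵐ[volume] openTriangle a b c :=
  (hsK.eventuallyLE.trans (closedTriangle_ae_eq_openTriangle a b c).le).antisymm
    hTs.eventuallyLE

end Triangle

theorem simplexRegion_ae_eq : simplexRegion =ᵐ[volume] openTriangle 0 0 1 :=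
  ae_eq_openTriangle_of_subset (fun _ ⟨hx, hy, hxy⟩ ↦ ⟨hx.le, hy.le, by linarith⟩)
    (fun _ ⟨hx, hy, hxy⟩ ↦ ⟨hx, hy, by linarith⟩)

theorem manipulableRegion_ae_eq :
    {p ∈ simplexRegion | Manipulable0 (simplexU p)} =ᵐ[volume]
      (openTriangle (1 / 3) (1 / 3) (1 / 3) ∪ openTriangle (1 / 3) 0 (1 / 3) ∪
        openTriangle 0 (1 / 3) (1 / 3) : Set (ℝ × ℝ)) := by
  simp only [manipulable0_simplexU_iff, sep_or, ← union_assoc]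
  refine .union (.union ?_ ?_) ?_ <;> refine ae_eq_openTriangle_of_subset ?_ ?_ <;>
    intro p hp <;>
    simp only [openTriangle, closedTriangle, simplexRegion, mem_ofPred_eq] at hp ⊢ <;>
    grind

theorem volume_manipulableRegion :
    volume {p ∈ simplexRegion | Manipulable0 (simplexU p)} = ENNReal.ofReal (1 / 6) := by
  have h₁₂ : Disjoint (openTriangle (1 / 3) (1 / 3) (1 / 3)) (openTriangle (1 / 3) 0 (1 / 3)) :=
    disjoint_left.2 fun _ ⟨hx, hy, _⟩ ⟨_, _, hxy⟩ ↦ by linarith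
  have h₁₃ : Disjoint (openTriangle (1 / 3) (1 / 3) (1 / 3)) (openTriangle 0 (1 / 3) (1 / 3)) :=
    disjoint_left.2 fun _ ⟨hx, hy, _⟩ ⟨_, _, hxy⟩ ↦ by linarith
  have h₂₃ : Disjoint (openTriangle (1 / 3) 0 (1 / 3)) (openTriangle 0 (1 / 3) (1 / 3)) :=
    disjoint_left.2 fun _ ⟨hx, _, hxy⟩ ⟨_, hy, _⟩ ↦ by linarith
  rw [measure_congr manipulableRegion_ae_eq,
    measure_union (disjoint_union_left.2 ⟨h₁₃, h₂₃⟩) (isOpen_openTriangle _ _ _).measurableSet,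
    measure_union h₁₂ (isOpen_openTriangle _ _ _).measurableSet,
    volume_openTriangle, volume_openTriangle, volume_openTriangle,
    ← ENNReal.ofReal_add, ← ENNReal.ofReal_add] <;> norm_num

theorem volume_simplexRegion : volume simplexRegion = ENNReal.ofReal (1 / 2) := by
  rw [measure_congr simplexRegion_ae_eq, volume_openTriangle _ _ zero_le_one, one_pow]

/-- with β = 0, the manipulable utilities form 1/3 of the simplex
(in relative Lebesgue area). -/
theorem manipulable_area_beta_zero :
    volume {p ∈ simplexRegion | Manipulable0 (simplexU p)} =
      (1 / 3 : ENNReal) * volume simplexRegion := by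
  rw [volume_manipulableRegion, volume_simplexRegion, ← ENNReal.ofReal_one, ← ENNReal.ofReal_ofNat,
    ← ENNReal.ofReal_div_of_pos, ← ENNReal.ofReal_mul] <;> norm_num
end

section
/- In the same 3-voter 3-alternative plurality setting, with voting cost term β = 1 so that a voter voting for alternative a receives total utility u(a) + E[u(winner(a, b, c))], the set of u in the 2-simplex that are manipulable has relative area 1/9. -/
open MeasureTheory

/-- Total utility with voting cost coefficient β = 1: the voter voting `a` receives
`u a` directly plus the expected utility of the plurality winner. -/
noncomputable def totalEU (u : Fin 3 → ℝ) (a b c : Fin 3) : ℝ :=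
  u a + pluralityEU u a b c

/-- `a` is a best response (β = 1) against opponent votes `(b, c)`. -/
def BestResponse1 (u : Fin 3 → ℝ) (b c a : Fin 3) : Prop :=
  ∀ a', totalEU u a' b c ≤ totalEU u a b c

/-- `u` is manipulable: there are two opponent profiles with disjoint best-response sets. -/
def Manipulable1 (u : Fin 3 → ℝ) : Prop :=
  ∃ b c b' c', ∀ a : Fin 3, ¬ (BestResponse1 u b c a ∧ BestResponse1 u b' c' a)

/-!
Against two equal opponent votes `(b, b)` the best response is the favourite alternative.
Against two distinct votes `b ≠ c` (third alternative `k`) the payoffs are `2 u b`, `2 u c` and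
`u k + 1/3`. Hence, if `i` is the favourite, voting for `i` is always a best response unless some
`j ≠ i` has `2 u j > u i + 1/3`, in which case `i` loses against `(j, k)`. Up to ties the
manipulable utilities thus form six triangles, one per ordered pair `(i, j)`, cut out by
`u j ≤ u i`, `u i + 1/3 ≤ 2 u j` and `u k ≥ 0`. Each is the preimage of the simplex under an affine
map of determinant `±54`, so together they cover `6 / 54 = 1/9` of it.
-/

open Set

namespace Fin

lemma exists_ne_and_ne (i j : Fin 3) : ∃ k, k ≠ i ∧ k ≠ j := by
  revert i j; decide

lemma add_add_eq_sum_of_ne {M : Type*} [AddCommMonoid M] (u : Fin 3 → M) {i j k : Fin 3}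
    (hij : i ≠ j) (hik : i ≠ k) (hjk : j ≠ k) : u i + u j + u k = ∑ m, u m := by
  fin_cases i <;> fin_cases j <;> fin_cases k <;> simp_all [Fin.sum_univ_three] <;> abel

end Fin

section Voting

variable {u : Fin 3 → ℝ} {a b c i j : Fin 3}

lemma totalEU_same_opponents : totalEU u a b b = u a + u b := by
  unfold totalEU pluralityEU
  split_ifs <;> simp_all

lemma totalEU_of_ne (hu : ∑ m, u m = 1) (hbc : b ≠ c) :
    totalEU u a b c = if a = b ∨ a = c then 2 * u a else u a + 1 / 3 := by
  unfold totalEU pluralityEU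
  by_cases hab : a = b
  · simp only [hab, ↓reduceIte, true_or]; ring
  by_cases hac : a = c
  · simp only [hac, ↓reduceIte, ite_self, or_true]; ring
  simp [hab, hac, hbc, Fin.add_add_eq_sum_of_ne u hab hac hbc, hu]

lemma lt_of_two_mul_gt (hu : ∑ m, u m = 1) (hij : i ≠ j) (hji : u j < u i)
    (hj : u i + 1 / 3 < 2 * u j) {m : Fin 3} (hmi : m ≠ i) : u m < u i := by
  by_cases hmj : m = j
  · rwa [hmj]
  have := Fin.add_add_eq_sum_of_ne u hij (Ne.symm hmi) (Ne.symm hmj)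
  linarith

theorem manipulable_of_two_mul_gt (hu : ∑ m, u m = 1) (hij : i ≠ j) (hji : u j < u i)
    (hj : u i + 1 / 3 < 2 * u j) : Manipulable1 u := by
  obtain ⟨k, hki, hkj⟩ := Fin.exists_ne_and_ne i j
  refine ⟨i, i, j, k, fun a ⟨hA, hB⟩ => ?_⟩
  have hai : a = i := by
    by_contra hai
    have := hA i
    rw [totalEU_same_opponents, totalEU_same_opponents] at this
    linarith [lt_of_two_mul_gt hu hij hji hj hai]
  have := hB j
  rw [totalEU_of_ne hu hkj.symm, totalEU_of_ne hu hkj.symm, hai] at this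
  simp only [true_or, ↓reduceIte, hij, hki.symm, or_self, one_div] at this
  linarith

theorem not_manipulable_of_two_mul_le (hu : ∑ m, u m = 1) (hmax : ∀ m, u m ≤ u i)
    (hle : ∀ m ≠ i, 2 * u m ≤ u i + 1 / 3) : ¬ Manipulable1 u := by
  have hi : 1 / 3 ≤ u i := by
    rw [Fin.sum_univ_three] at hu
    linarith [hmax 0, hmax 1, hmax 2]
  have hbr : ∀ b c, BestResponse1 u b c i := by
    intro b c a
    rcases eq_or_ne b c with rfl | hbc
    · rw [totalEU_same_opponents, totalEU_same_opponents]
      linarith [hmax a]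
    rw [totalEU_of_ne hu hbc, totalEU_of_ne hu hbc]
    by_cases ha : a = b ∨ a = c <;> by_cases hib : i = b ∨ i = c <;>
      simp only [ha, hib, if_true, if_false]
    · linarith [hmax a]
    · have hai : a ≠ i := by rintro rfl; exact hib ha
      linarith [hle a hai]
    · linarith [hmax a]
    · linarith [hmax a]
  rintro ⟨b, c, b', c', h⟩
  exact h i ⟨hbr b c, hbr b' c'⟩

end Voting

section AffineVolume

noncomputable def linearMapOfCoeffs (a b c d : ℝ) : ℝ × ℝ →ₗ[ℝ] ℝ × ℝ :=
  (a • LinearMap.fst ℝ ℝ ℝ + b • LinearMap.snd ℝ ℝ ℝ).prod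
    (c • LinearMap.fst ℝ ℝ ℝ + d • LinearMap.snd ℝ ℝ ℝ)

lemma det_linearMapOfCoeffs (a b c d : ℝ) :
    LinearMap.det (linearMapOfCoeffs a b c d) = a * d - b * c := by
  rw [← LinearMap.det_toMatrix (Module.Basis.finTwoProd ℝ), Matrix.det_fin_two]
  simp [LinearMap.toMatrix_apply, linearMapOfCoeffs]

theorem volume_preimage_affine (a b c d e f : ℝ) (h : a * d - b * c ≠ 0) (s : Set (ℝ × ℝ)) :
    volume ((fun p : ℝ × ℝ => (a * p.1 + b * p.2 + e, c * p.1 + d * p.2 + f)) ⁻¹' s) =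
      ENNReal.ofReal |(a * d - b * c)⁻¹| * volume s := by
  have hcomp : (fun p : ℝ × ℝ => (a * p.1 + b * p.2 + e, c * p.1 + d * p.2 + f)) =
      (· + (e, f)) ∘ linearMapOfCoeffs a b c d := by
    ext p <;> simp [linearMapOfCoeffs]
  rw [hcomp, preimage_comp, ← det_linearMapOfCoeffs,
    Measure.addHaar_preimage_linearMap _ (by rwa [det_linearMapOfCoeffs]),
    measure_preimage_add_right]

lemma volume_setOf_fst_eq (c : ℝ) : volume {p : ℝ × ℝ | p.1 = c} = 0 := by
  have : {p : ℝ × ℝ | p.1 = c} = {c} ×ˢ univ := by ext; simp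
  rw [this, Measure.volume_eq_prod, Measure.prod_prod, Real.volume_singleton, zero_mul]

theorem volume_setOf_line (a b c : ℝ) (h : a ≠ 0 ∨ b ≠ 0) :
    volume {p : ℝ × ℝ | a * p.1 + b * p.2 = c} = 0 := by
  rcases h with ha | hb
  · have := volume_preimage_affine a b 0 1 0 0 (by simpa using ha) {q | q.1 = c}
    simpa [volume_setOf_fst_eq] using this
  · have := volume_preimage_affine a b 1 0 0 0 (by simpa using hb) {q | q.1 = c}
    simpa [volume_setOf_fst_eq] using this

end AffineVolume

section Simplex

def openSimplexRegion : Set (ℝ × ℝ) := {p | 0 < p.1 ∧ 0 < p.2 ∧ p.1 + p.2 < 1}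

lemma volume_openSimplexRegion : volume openSimplexRegion = volume simplexRegion := by
  refine measure_eq_measure_of_null_sdiff (fun p ⟨h1, h2, h3⟩ => ⟨h1.le, h2.le, h3.le⟩) ?_
  refine measure_mono_null (t := {p | 1 * p.1 + 0 * p.2 = 0} ∪ {p | 0 * p.1 + 1 * p.2 = 0} ∪
    {p | 1 * p.1 + 1 * p.2 = 1}) ?_ ?_
  · rintro p ⟨⟨h1, h2, h3⟩, hp⟩
    simp only [openSimplexRegion, mem_ofPred_eq, not_and_or, not_lt] at hp
    simp only [mem_union, mem_ofPred_eq]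
    rcases hp with hp | hp | hp
    · left; left; linarith
    · left; right; linarith
    · right; linarith
  · simp only [measure_union_null_iff]
    exact ⟨⟨volume_setOf_line _ _ _ (by norm_num), volume_setOf_line _ _ _ (by norm_num)⟩,
      volume_setOf_line _ _ _ (by norm_num)⟩

lemma simplexU_sum (p : ℝ × ℝ) : ∑ m, simplexU p m = 1 := by
  simp [simplexU, Fin.sum_univ_three]

lemma mem_simplexRegion_iff {p : ℝ × ℝ} : p ∈ simplexRegion ↔ ∀ m, 0 ≤ simplexU p m := by
  simp [simplexRegion, simplexU, Fin.forall_fin_succ, sub_sub, sub_nonneg]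

lemma simplexU_apply (p : ℝ × ℝ) (m : Fin 3) :
    simplexU p m = ![1, 0, -1] m * p.1 + ![0, 1, -1] m * p.2 + ![0, 0, 1] m := by
  fin_cases m <;> simp [simplexU]; ring

end Simplex

section Chambers

def chamber (i j : Fin 3) : Set (ℝ × ℝ) :=
  {p | simplexU p j ≤ simplexU p i ∧ simplexU p i + 1 / 3 ≤ 2 * simplexU p j ∧
    simplexU p i + simplexU p j ≤ 1}

def openChamber (i j : Fin 3) : Set (ℝ × ℝ) :=
  {p | simplexU p j < simplexU p i ∧ simplexU p i + 1 / 3 < 2 * simplexU p j ∧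
    simplexU p i + simplexU p j < 1}

/-- Sends the sides `u j = u i`, `2 u j = u i + 1/3`, `u i + u j = 1` of the chamber to those
of the standard simplex. -/
noncomputable def chamberMap (i j : Fin 3) (p : ℝ × ℝ) : ℝ × ℝ :=
  (9 * (simplexU p i - simplexU p j), 6 * (2 * simplexU p j - simplexU p i) - 2)

lemma chamber_eq_preimage (i j : Fin 3) : chamber i j = chamberMap i j ⁻¹' simplexRegion := by
  ext p
  simp only [chamber, chamberMap, simplexRegion, mem_preimage, mem_ofPred_eq]
  constructor <;> rintro ⟨h1, h2, h3⟩ <;> refine ⟨?_, ?_, ?_⟩ <;> linarith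

lemma openChamber_eq_preimage (i j : Fin 3) :
    openChamber i j = chamberMap i j ⁻¹' openSimplexRegion := by
  ext p
  simp only [openChamber, chamberMap, openSimplexRegion, mem_preimage, mem_ofPred_eq]
  constructor <;> rintro ⟨h1, h2, h3⟩ <;> refine ⟨?_, ?_, ?_⟩ <;> linarith

lemma volume_preimage_chamberMap {i j : Fin 3} (hij : i ≠ j) (s : Set (ℝ × ℝ)) :
    volume (chamberMap i j ⁻¹' s) = ENNReal.ofReal 54⁻¹ * volume s := by
  set α : Fin 3 → ℝ := ![1, 0, -1]
  set β : Fin 3 → ℝ := ![0, 1, -1]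
  set γ : Fin 3 → ℝ := ![0, 0, 1]
  have hmap : chamberMap i j = fun p => (9 * (α i - α j) * p.1 + 9 * (β i - β j) * p.2 +
      9 * (γ i - γ j), 6 * (2 * α j - α i) * p.1 + 6 * (2 * β j - β i) * p.2 +
      (6 * (2 * γ j - γ i) - 2)) := by
    ext p <;> simp only [chamberMap, simplexU_apply] <;> ring
  have hminor : |α i * β j - α j * β i| = 1 := by
    fin_cases i <;> fin_cases j <;> simp_all [α, β]
  have hdet : 9 * (α i - α j) * (6 * (2 * β j - β i)) - 9 * (β i - β j) * (6 * (2 * α j - α i))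
      = 54 * (α i * β j - α j * β i) := by ring
  rw [hmap, volume_preimage_affine _ _ _ _ _ _ (by rw [hdet]; intro h; simp_all) s, hdet,
    abs_inv, abs_mul, hminor]
  norm_num

lemma volume_chamber {i j : Fin 3} (hij : i ≠ j) :
    volume (chamber i j) = ENNReal.ofReal 54⁻¹ * volume simplexRegion := by
  rw [chamber_eq_preimage, volume_preimage_chamberMap hij]

lemma volume_openChamber {i j : Fin 3} (hij : i ≠ j) :
    volume (openChamber i j) = ENNReal.ofReal 54⁻¹ * volume simplexRegion := by
  rw [openChamber_eq_preimage, volume_preimage_chamberMap hij, volume_openSimplexRegion]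

lemma measurableSet_openChamber (i j : Fin 3) : MeasurableSet (openChamber i j) := by
  simp only [openChamber, simplexU_apply]
  measurability

end Chambers

section ManipulableRegion

lemma openChamber_subset_manipulable {i j : Fin 3} (hij : i ≠ j) :
    openChamber i j ⊆ {p ∈ simplexRegion | Manipulable1 (simplexU p)} := by
  rintro p ⟨hji, hj, hk⟩
  refine ⟨mem_simplexRegion_iff.2 fun m => ?_,
    manipulable_of_two_mul_gt (simplexU_sum p) hij hji hj⟩
  by_cases hmi : m = i
  · subst hmi; linarith
  by_cases hmj : m = j
  · subst hmj; linarith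
  have := Fin.add_add_eq_sum_of_ne (simplexU p) hij (Ne.symm hmi) (Ne.symm hmj)
  linarith [simplexU_sum p]

lemma manipulable_subset_biUnion_chamber :
    {p ∈ simplexRegion | Manipulable1 (simplexU p)} ⊆
      ⋃ q ∈ (Finset.univ : Finset (Fin 3)).offDiag, chamber q.1 q.2 := by
  rintro p ⟨hp, hman⟩
  have hu := simplexU_sum p
  obtain ⟨i, hmax⟩ := Finite.exists_max (simplexU p)
  obtain ⟨j, hji, hj⟩ : ∃ j ≠ i, simplexU p i + 1 / 3 < 2 * simplexU p j := by
    by_contra! hle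
    exact not_manipulable_of_two_mul_le hu hmax hle hman
  obtain ⟨k, hki, hkj⟩ := Fin.exists_ne_and_ne i j
  have := Fin.add_add_eq_sum_of_ne (simplexU p) hji.symm hki.symm hkj.symm
  simp only [mem_iUnion, Finset.mem_offDiag, Finset.mem_univ, true_and, exists_prop]
  exact ⟨(i, j), hji.symm, hmax j, hj.le, by linarith [mem_simplexRegion_iff.1 hp k]⟩

lemma eq_of_mem_openChamber {i j i' j' : Fin 3} (hij : i ≠ j) (hij' : i' ≠ j') {p : ℝ × ℝ}
    (hp : p ∈ openChamber i j) (hp' : p ∈ openChamber i' j') : i = i' ∧ j = j' := by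
  obtain ⟨hji, hj, -⟩ := hp
  obtain ⟨hji', hj', -⟩ := hp'
  have hu := simplexU_sum p
  have hii' : i = i' := by
    by_contra hii'
    linarith [lt_of_two_mul_gt hu hij hji hj (Ne.symm hii'),
      lt_of_two_mul_gt hu hij' hji' hj' hii']
  subst hii'
  refine ⟨rfl, ?_⟩
  by_contra hjj'
  have := Fin.add_add_eq_sum_of_ne (simplexU p) hij hij' hjj'
  linarith

lemma pairwiseDisjoint_openChamber :
    ((Finset.univ : Finset (Fin 3)).offDiag : Set (Fin 3 × Fin 3)).PairwiseDisjoint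
      fun q => openChamber q.1 q.2 := by
  rintro ⟨i, j⟩ hq ⟨i', j'⟩ hq' hne
  simp only [Finset.coe_offDiag, Finset.coe_univ, mem_offDiag, mem_univ, true_and] at hq hq'
  refine Set.disjoint_left.2 fun p hp hp' => hne ?_
  obtain ⟨rfl, rfl⟩ := eq_of_mem_openChamber hq hq' hp hp'
  rfl

end ManipulableRegion

/-- with β = 1, the manipulable utilities form only 1/9 of the simplex
(in relative Lebesgue area). -/
theorem manipulable_area_beta_one :
    volume {p ∈ simplexRegion | Manipulable1 (simplexU p)} =
      (1 / 9 : ENNReal) * volume simplexRegion := by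
  set P := (Finset.univ : Finset (Fin 3)).offDiag
  have hP : ∀ q ∈ P, q.1 ≠ q.2 := fun q hq => (Finset.mem_offDiag.1 hq).2.2
  have hsum : ∑ _q ∈ P, ENNReal.ofReal 54⁻¹ * volume simplexRegion =
      1 / 9 * volume simplexRegion := by
    rw [Finset.sum_const, nsmul_eq_mul, ← mul_assoc]
    congr 1
    rw [show (P.card : ENNReal) = ENNReal.ofReal 6 by simp [P],
      ← ENNReal.ofReal_mul (by norm_num), one_div, ← ENNReal.ofReal_ofNat 9,
      ← ENNReal.ofReal_inv_of_pos (by norm_num)]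
    norm_num
  apply le_antisymm
  · calc _ ≤ volume (⋃ q ∈ P, chamber q.1 q.2) := measure_mono manipulable_subset_biUnion_chamber
      _ ≤ ∑ q ∈ P, volume (chamber q.1 q.2) := measure_biUnion_finset_le _ _
      _ = _ := by rw [Finset.sum_congr rfl fun q hq => volume_chamber (hP q hq), hsum]
  · calc _ = ∑ q ∈ P, volume (openChamber q.1 q.2) := by
          rw [Finset.sum_congr rfl fun q hq => volume_openChamber (hP q hq), hsum]
      _ = volume (⋃ q ∈ P, openChamber q.1 q.2) :=
          (measure_biUnion_finset pairwiseDisjoint_openChamber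
            fun q _ => measurableSet_openChamber q.1 q.2).symm
      _ ≤ _ := measure_mono (iUnion₂_subset fun q hq => openChamber_subset_manipulable (hP q hq))
end

section
/- In the 3-voter 3-alternative plurality setting with β = 1, if a utility vector u = (u_1, u_2, u_3) in the simplex satisfies u_{(1)} − u_{(2)} > 1/2 (where u_{(1)} ≥ u_{(2)} ≥ u_{(3)} are the sorted utilities), then voting for the top alternative is a weakly dominant strategy (u is not manipulable). -/
/-- if `u` lies in the 2-simplex and its top utility exceeds the second
largest by more than 1/2 (i.e. `u astar - u a > 1/2` for every `a ≠ astar`, where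
`astar` is a top alternative), then with β = 1 voting for the top alternative is weakly
dominant: `u` is not manipulable. -/
theorem top_vote_weakly_dominant
    (u : Fin 3 → ℝ) (hnn : ∀ i, 0 ≤ u i) (hsum : u 0 + u 1 + u 2 = 1)
    (astar : Fin 3) (hgap : ∀ a, a ≠ astar → u astar - u a > 1 / 2) :
    ∀ b c a, totalEU u a b c ≤ totalEU u astar b c := by
  have h0 := hnn 0
  have h1 := hnn 1
  have h2 := hnn 2
  intro b c a
  fin_cases astar <;>
    [ (replace hgap : 1/2 < u 0 - u 1 ∧ 1/2 < u 0 - u 2 :=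
        ⟨hgap 1 (by decide), hgap 2 (by decide)⟩);
      (replace hgap : 1/2 < u 1 - u 0 ∧ 1/2 < u 1 - u 2 :=
        ⟨hgap 0 (by decide), hgap 2 (by decide)⟩);
      (replace hgap : 1/2 < u 2 - u 0 ∧ 1/2 < u 2 - u 1 :=
        ⟨hgap 0 (by decide), hgap 1 (by decide)⟩)] <;>
  obtain ⟨g1, g2⟩ := hgap <;>
  fin_cases b <;> fin_cases c <;> fin_cases a <;>
    simp [totalEU, pluralityEU] <;> linarith
end

section
/- Conversely, any occupancy measure satisfying the flow and initial constraints with nonnegativity arises from some (possibly time-dependent) policy: setting π_t(a|s) = ρ^t_{s,a}/Σ_{a'} ρ^t_{s,a'} when the denominator is positive (arbitrary otherwise) induces exactly the given occupancy measure. -/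
/-- any nonnegative `ρ` satisfying the initial and flow constraints arises
from a policy: take `π_t(a|s) = ρ^t_{s,a} / Σ_{a'} ρ^t_{s,a'}` whenever the denominator
is positive (arbitrary stochastic otherwise).  Then the occupancy measure `ρ'` induced by
`π` via the forward construction coincides with `ρ`. -/
theorem occupancy_induced_by_derived_policy
    {S A : Type} [Fintype S] [Fintype A]
    (P : S → A → S → ℝ) (hPnn : ∀ s a s', 0 ≤ P s a s')
    (hPsum : ∀ s a, ∑ s', P s a s' = 1)
    (μ0 : S → ℝ) (hμnn : ∀ s, 0 ≤ μ0 s) (hμsum : ∑ s, μ0 s = 1)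
    (ρ : ℕ → S → A → ℝ) (hρnn : ∀ t s a, 0 ≤ ρ t s a)
    (hρ0 : ∀ s, ∑ a, ρ 0 s a = μ0 s)
    (hρflow : ∀ t s', ∑ a, ρ (t + 1) s' a = ∑ s, ∑ a, P s a s' * ρ t s a)
    (π : ℕ → S → A → ℝ) (hπnn : ∀ t s a, 0 ≤ π t s a)
    (hπsum : ∀ t s, ∑ a, π t s a = 1)
    (hπdef : ∀ t s, 0 < ∑ a', ρ t s a' →
      ∀ a, π t s a = ρ t s a / ∑ a', ρ t s a')
    (ρ' : ℕ → S → A → ℝ)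
    (hρ'0 : ∀ s a, ρ' 0 s a = μ0 s * π 0 s a)
    (hρ'succ : ∀ t s' a',
      ρ' (t + 1) s' a' = π (t + 1) s' a' * ∑ s, ∑ a, P s a s' * ρ' t s a) :
    ∀ t s a, ρ' t s a = ρ t s a := by
  have key : ∀ t s a, ρ' t s a = (∑ a', ρ t s a') * π t s a →
      ρ' t s a = ρ t s a := by
    intro t s a h
    rcases lt_or_eq_of_le (Finset.sum_nonneg fun a' _ => hρnn t s a') with hpos | hzero
    · rw [h, hπdef t s hpos a, mul_div_assoc', mul_comm, mul_div_assoc,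
        div_self (ne_of_gt hpos), mul_one]
    · have h0 : ∀ a' ∈ Finset.univ, ρ t s a' = 0 :=
        (Finset.sum_eq_zero_iff_of_nonneg fun a' _ => hρnn t s a').mp hzero.symm
      rw [h, ← hzero, zero_mul, h0 a (Finset.mem_univ a)]
  intro t
  induction t with
  | zero =>
    intro s a
    exact key 0 s a (by rw [hρ'0, hρ0])
  | succ t ih =>
    intro s a
    refine key (t + 1) s a ?_
    rw [hρ'succ, hρflow, mul_comm]
    congr 1
    exact Finset.sum_congr rfl fun s _ => Finset.sum_congr rfl fun a _ => by rw [ih]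
end
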